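/- Let M be a measurement assemblage in dimension d with m settings and o outcomes, p a weighting, and ρ a density matrix on Fin d × Fin d. Define σ x a = Tr₁[(M x a ⊗ₖ 1) ρ]. Then the steerability of σ is bounded by the geometric entanglement of ρ: S(σ,p) ≤ E(ρ). -/

import Mathlib

open Matrix Kronecker BigOperators ComplexOrder

noncomputable section

def IsDensityMatrix {n : Type*} [Fintype n] [DecidableEq n] (ρ : Matrix n n ℂ) : Prop :=
  ρ.PosSemidef ∧ ρ.trace = 1

noncomputable def traceNorm {n : Type*} [Fintype n] [DecidableEq n] (X : Matrix n n ℂ) : ℝ :=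
  (((Matrix.posSemidef_conjTranspose_mul_self X).1.eigenvectorUnitary : Matrix n n ℂ) *
      diagonal (((↑) : ℝ → ℂ) ∘ (√·) ∘ (Matrix.posSemidef_conjTranspose_mul_self X).1.eigenvalues) *
      (star (Matrix.posSemidef_conjTranspose_mul_self X).1.eigenvectorUnitary : Matrix n n ℂ)).trace.re

noncomputable def specNorm {n : Type*} [Fintype n] [DecidableEq n] (X : Matrix n n ℂ) : ℝ :=
  ‖Matrix.toEuclideanCLM (𝕜 := ℂ) X‖

def ptrace1 {n e : Type*} [Fintype n] (ρ : Matrix (n × e) (n × e) ℂ) : Matrix e e ℂ :=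
  Matrix.of fun j j' => ∑ i, ρ (i, j) (i, j')

def IsAssemblage {d m o : ℕ} (M : Fin m → Fin o → Matrix (Fin d) (Fin d) ℂ) : Prop :=
  (∀ x a, (M x a).PosSemidef) ∧ ∀ x, ∑ a, M x a = 1

def IsWeighting {m : ℕ} (p : Fin m → ℝ) : Prop :=
  (∀ x, 0 < p x) ∧ ∑ x, p x = 1

noncomputable def Ddiamond {d m o : ℕ} (p : Fin m → ℝ)
    (M N : Fin m → Fin o → Matrix (Fin d) (Fin d) ℂ) : ℝ :=
  (1 / 2) * ∑ x, p x *
    ⨆ ρ : {ρ : Matrix (Fin d × Fin d) (Fin d × Fin d) ℂ // IsDensityMatrix ρ},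
      ∑ a, traceNorm (ptrace1 (((M x a - N x a) ⊗ₖ (1 : Matrix (Fin d) (Fin d) ℂ)) * ρ.1))

def JointlyMeasurable {d m o : ℕ} (F : Fin m → Fin o → Matrix (Fin d) (Fin d) ℂ) : Prop :=
  ∃ G : (Fin m → Fin o) → Matrix (Fin d) (Fin d) ℂ,
    (∀ lam, (G lam).PosSemidef) ∧ (∑ lam, G lam = 1) ∧
    ∀ x a, F x a = ∑ lam ∈ Finset.univ.filter (fun lam => lam x = a), G lam

noncomputable def Incomp {d m o : ℕ} (p : Fin m → ℝ)
    (M : Fin m → Fin o → Matrix (Fin d) (Fin d) ℂ) : ℝ :=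
  ⨅ F : {F : Fin m → Fin o → Matrix (Fin d) (Fin d) ℂ // IsAssemblage F ∧ JointlyMeasurable F},
    Ddiamond p M F.1


def IsStateAssemblage {d m o : ℕ} (σ : Fin m → Fin o → Matrix (Fin d) (Fin d) ℂ) : Prop :=
  (∀ x a, (σ x a).PosSemidef) ∧ ∀ x, ∑ a, (σ x a).trace = 1

def HasLHSModel {d m o : ℕ} (σ : Fin m → Fin o → Matrix (Fin d) (Fin d) ℂ) : Prop :=
  ∃ σ' : (Fin m → Fin o) → Matrix (Fin d) (Fin d) ℂ,
    (∀ lam, (σ' lam).PosSemidef) ∧ (∑ lam, (σ' lam).trace = 1) ∧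
    ∀ x a, σ x a = ∑ lam ∈ Finset.univ.filter (fun lam => lam x = a), σ' lam

noncomputable def Steerability {d m o : ℕ} (p : Fin m → ℝ)
    (σ : Fin m → Fin o → Matrix (Fin d) (Fin d) ℂ) : ℝ :=
  ⨅ τ : {τ : Fin m → Fin o → Matrix (Fin d) (Fin d) ℂ // IsStateAssemblage τ ∧ HasLHSModel τ},
    (1 / 2) * ∑ x, p x * ∑ a, traceNorm (σ x a - τ.1 x a)

def IsSeparableState {d : ℕ} (ρS : Matrix (Fin d × Fin d) (Fin d × Fin d) ℂ) : Prop :=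
  ∃ (k : ℕ) (w : Fin k → ℝ) (A B : Fin k → Matrix (Fin d) (Fin d) ℂ),
    (∀ i, 0 ≤ w i) ∧ (∑ i, w i = 1) ∧
    (∀ i, IsDensityMatrix (A i)) ∧ (∀ i, IsDensityMatrix (B i)) ∧
    ρS = ∑ i, w i • ((A i) ⊗ₖ (B i))

noncomputable def GeomEntanglement {d : ℕ}
    (ρ : Matrix (Fin d × Fin d) (Fin d × Fin d) ℂ) : ℝ :=
  ⨅ ρS : {ρS : Matrix (Fin d × Fin d) (Fin d × Fin d) ℂ //
            IsDensityMatrix ρS ∧ IsSeparableState ρS},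
    (1 / 2) * traceNorm (ρ - ρS.1)

/-!
A separable state `ρS = ∑ⱼ wⱼ Aⱼ ⊗ Bⱼ` yields, under the measurements `M`, the assemblage
`τ x a = ∑ⱼ wⱼ Tr(M x a Aⱼ) Bⱼ`, which has a local-hidden-state model: the hidden variable picks
`j` with weight `wⱼ` and then an outcome for every setting independently, outcome `a` for setting
`x` with probability `Tr(M x a Aⱼ)`. So `S(σ,p)` is at most the `p`-average of
`∑ₐ ‖σ x a - τ x a‖₁ / 2`, and `σ x a - τ x a = Tr₁[(M x a ⊗ 1)(ρ - ρS)]`. For a Hermitian `Δ`,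
writing `Δ = Δ⁺ - Δ⁻` and using that each `Tr₁[(M x a ⊗ 1) ·]` is positive while their sum over
`a` preserves the trace gives `∑ₐ ‖Tr₁[(M x a ⊗ 1) Δ]‖₁ ≤ Tr Δ⁺ + Tr Δ⁻ = ‖Δ‖₁`.
-/

lemma sum_filter_prod_of_sum_eq_one {α β R : Type*} [Fintype α] [DecidableEq α] [Fintype β]
    [DecidableEq β] [CommSemiring R] (c : α → β → R) (hc : ∀ x, ∑ b, c x b = 1) (x : α) (a : β) :
    ∑ lam ∈ Finset.univ.filter (fun lam : α → β => lam x = a), ∏ y, c y (lam y) = c x a := by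
  have hfiber := Fintype.piFinset_update_singleton_eq_filter_piFinset_eq
    (fun _ : α => (Finset.univ : Finset β)) x (Finset.mem_univ a)
  rw [Fintype.piFinset_univ] at hfiber
  rw [← hfiber, ← Finset.prod_univ_sum, Finset.prod_eq_single x]
  · simp
  · intro y _ hy
    simp [Function.update_of_ne hy, hc]
  · simp

lemma Matrix.sum_kronecker {ι l m n p α : Type*} [NonUnitalNonAssocSemiring α] (s : Finset ι)
    (A : ι → Matrix l m α) (B : Matrix n p α) : (∑ i ∈ s, A i) ⊗ₖ B = ∑ i ∈ s, A i ⊗ₖ B := by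
  ext
  simp [Matrix.sum_apply, Finset.sum_mul]

open scoped MatrixOrder

namespace Matrix

variable {n : Type*} [Fintype n] [DecidableEq n]

lemma traceNorm_eq_re_trace_abs (X : Matrix n n ℂ) : traceNorm X = (CFC.abs X).trace.re := by
  have hX := posSemidef_conjTranspose_mul_self X
  rw [CFC.abs, star_eq_conjTranspose, CFC.sqrt_eq_real_sqrt _ hX.nonneg,
    cfcₙ_eq_cfc (hf0 := Real.sqrt_zero), hX.1.cfc_eq]
  rfl

lemma traceNorm_nonneg (X : Matrix n n ℂ) : 0 ≤ traceNorm X := by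
  rw [traceNorm_eq_re_trace_abs]
  exact Complex.nonneg_iff.mp (nonneg_iff_posSemidef.mp (CFC.abs_nonneg X)).trace_nonneg |>.1

lemma PosSemidef.trace_mul_nonneg {A B : Matrix n n ℂ} (hA : A.PosSemidef) (hB : B.PosSemidef) :
    0 ≤ (A * B).trace := by
  obtain ⟨S, hS, rfl⟩ : ∃ S : Matrix n n ℂ, S.PosSemidef ∧ B = S * S :=
    ⟨CFC.sqrt B, nonneg_iff_posSemidef.mp (CFC.sqrt_nonneg B),
      (CFC.sqrt_mul_sqrt_self B hB.nonneg).symm⟩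
  rw [← mul_assoc, trace_mul_cycle]
  simpa [hS.1.eq] using (hA.mul_mul_conjTranspose_same S).trace_nonneg

lemma IsHermitian.exists_traceNorm_eq {H : Matrix n n ℂ} (hH : H.IsHermitian) :
    ∃ P N : Matrix n n ℂ, P.PosSemidef ∧ N.PosSemidef ∧ H = P - N ∧
      traceNorm H = P.trace.re + N.trace.re := by
  refine ⟨H⁺, H⁻, nonneg_iff_posSemidef.mp (CFC.posPart_nonneg H),
    nonneg_iff_posSemidef.mp (CFC.negPart_nonneg H), (CFC.posPart_sub_negPart H hH).symm, ?_⟩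
  rw [traceNorm_eq_re_trace_abs, ← CFC.posPart_add_negPart H hH, trace_add, Complex.add_re]

lemma traceNorm_sub_le {A B : Matrix n n ℂ} (hA : A.PosSemidef) (hB : B.PosSemidef) :
    traceNorm (A - B) ≤ A.trace.re + B.trace.re := by
  have hH : IsSelfAdjoint (A - B) := hA.1.sub hB.1
  have hcont (f : ℝ → ℝ) : ContinuousOn f (spectrum ℝ (A - B)) :=
    (A - B).finite_real_spectrum.continuousOn f
  -- `s = sign (A - B)` gives `|A - B| = s (A - B)` with `-1 ≤ s ≤ 1`.
  set s := cfc (fun x : ℝ => (SignType.sign x : ℝ)) (A - B)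
  have habs : CFC.abs (A - B) = s * (A - B) := by
    conv_rhs => rw [← cfc_id' ℝ (A - B), ← cfc_mul _ _ _ (hcont _) (hcont _)]
    rw [CFC.abs_eq_cfc_norm _ hH]
    exact cfc_congr fun x _ => (sign_mul_self x).symm
  have hposA : 0 ≤ ((1 - s) * A).trace := by
    refine PosSemidef.trace_mul_nonneg (nonneg_iff_posSemidef.mp ?_) hA
    rw [← cfc_const_one ℝ (A - B), ← cfc_sub _ _ _ (hcont _) (hcont _)]
    exact cfc_nonneg fun x _ => sub_nonneg.mpr (by rcases SignType.sign x <;> norm_num)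
  have hposB : 0 ≤ ((1 + s) * B).trace := by
    refine PosSemidef.trace_mul_nonneg (nonneg_iff_posSemidef.mp ?_) hB
    rw [← cfc_const_one ℝ (A - B), ← cfc_add _ _ _ (hcont _) (hcont _)]
    exact cfc_nonneg fun x _ => by rcases SignType.sign x <;> norm_num
  have htr : (s * (A - B)).trace =
      A.trace + B.trace - ((1 - s) * A).trace - ((1 + s) * B).trace := by
    simp only [sub_mul, add_mul, one_mul, mul_sub, trace_sub, trace_add]
    ring
  have hposA_re := (Complex.nonneg_iff.mp hposA).1
  have hposB_re := (Complex.nonneg_iff.mp hposB).1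
  rw [traceNorm_eq_re_trace_abs, habs, htr]
  simp only [Complex.sub_re, Complex.add_re]
  linarith

end Matrix

section PartialTrace

variable {n e : Type*} [Fintype n]

lemma ptrace1_sub (X Y : Matrix (n × e) (n × e) ℂ) : ptrace1 (X - Y) = ptrace1 X - ptrace1 Y := by
  ext j j'
  simp [ptrace1, Finset.sum_sub_distrib]

lemma ptrace1_smul {R : Type*} [DistribSMul R ℂ] (c : R) (X : Matrix (n × e) (n × e) ℂ) :
    ptrace1 (c • X) = c • ptrace1 X := by
  ext j j'
  simp [ptrace1, Finset.smul_sum]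

lemma ptrace1_sum {ι : Type*} (s : Finset ι) (X : ι → Matrix (n × e) (n × e) ℂ) :
    ptrace1 (∑ i ∈ s, X i) = ∑ i ∈ s, ptrace1 (X i) := by
  ext j j'
  simp only [ptrace1, of_apply, Matrix.sum_apply]
  exact Finset.sum_comm

lemma ptrace1_kronecker (A : Matrix n n ℂ) (B : Matrix e e ℂ) :
    ptrace1 (A ⊗ₖ B) = A.trace • B := by
  ext j j'
  simp [ptrace1, trace, Finset.sum_mul]

lemma ptrace1_eq_sum_submatrix (X : Matrix (n × e) (n × e) ℂ) :
    ptrace1 X = ∑ i, X.submatrix (Prod.mk i) (Prod.mk i) := by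
  ext j j'
  simp [ptrace1, Matrix.sum_apply]

lemma posSemidef_ptrace1 {X : Matrix (n × e) (n × e) ℂ} (hX : X.PosSemidef) :
    (ptrace1 X).PosSemidef := by
  rw [ptrace1_eq_sum_submatrix]
  exact posSemidef_sum _ fun i _ => hX.submatrix _

variable [Fintype e]

lemma trace_ptrace1 (X : Matrix (n × e) (n × e) ℂ) : (ptrace1 X).trace = X.trace := by
  simp only [ptrace1, trace, diag, of_apply, Fintype.sum_prod_type]
  exact Finset.sum_comm

variable [DecidableEq e]

lemma ptrace1_kronecker_one_mul_comm (K : Matrix n n ℂ) (X : Matrix (n × e) (n × e) ℂ) :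
    ptrace1 ((K ⊗ₖ (1 : Matrix e e ℂ)) * X) = ptrace1 (X * (K ⊗ₖ (1 : Matrix e e ℂ))) := by
  ext j j'
  simp only [ptrace1, of_apply, mul_apply, Fintype.sum_prod_type, kroneckerMap_apply, one_apply,
    mul_ite, ite_mul, mul_zero, zero_mul, mul_one, Finset.sum_ite_eq, Finset.sum_ite_eq',
    Finset.mem_univ, if_true]
  rw [Finset.sum_comm]
  exact Finset.sum_congr rfl fun i _ => Finset.sum_congr rfl fun i' _ => mul_comm _ _

lemma ptrace1_kronecker_one_mul_kronecker (K A : Matrix n n ℂ) (B : Matrix e e ℂ) :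
    ptrace1 ((K ⊗ₖ (1 : Matrix e e ℂ)) * (A ⊗ₖ B)) = (K * A).trace • B := by
  rw [← mul_kronecker_mul, one_mul, ptrace1_kronecker]

variable [DecidableEq n]

lemma posSemidef_ptrace1_kronecker_one_mul {K : Matrix n n ℂ} {X : Matrix (n × e) (n × e) ℂ}
    (hK : K.PosSemidef) (hX : X.PosSemidef) :
    (ptrace1 ((K ⊗ₖ (1 : Matrix e e ℂ)) * X)).PosSemidef := by
  set S := CFC.sqrt K ⊗ₖ (1 : Matrix e e ℂ)
  have hS : Sᴴ = S := by
    rw [conjTranspose_kronecker, conjTranspose_one,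
      (nonneg_iff_posSemidef.mp (CFC.sqrt_nonneg K)).1.eq]
  have hKS : K ⊗ₖ (1 : Matrix e e ℂ) = S * S := by
    rw [← mul_kronecker_mul, CFC.sqrt_mul_sqrt_self K hK.nonneg, one_mul]
  rw [hKS, mul_assoc, ptrace1_kronecker_one_mul_comm]
  simpa only [hS] using posSemidef_ptrace1 (hX.mul_mul_conjTranspose_same S)

lemma sum_trace_ptrace1_kronecker_one_mul {ι : Type*} [Fintype ι] {M : ι → Matrix n n ℂ}
    (hM : ∑ a, M a = 1) (X : Matrix (n × e) (n × e) ℂ) :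
    ∑ a, (ptrace1 ((M a ⊗ₖ (1 : Matrix e e ℂ)) * X)).trace = X.trace := by
  simp_rw [trace_ptrace1]
  rw [← trace_sum, ← Finset.sum_mul, ← sum_kronecker, hM, one_kronecker_one, one_mul]

lemma sum_traceNorm_ptrace1_kronecker_one_mul_le {ι : Type*} [Fintype ι]
    {M : ι → Matrix n n ℂ} (hM : ∀ a, (M a).PosSemidef) (hM1 : ∑ a, M a = 1)
    {Δ : Matrix (n × e) (n × e) ℂ} (hΔ : Δ.IsHermitian) :
    ∑ a, traceNorm (ptrace1 ((M a ⊗ₖ (1 : Matrix e e ℂ)) * Δ)) ≤ traceNorm Δ := by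
  obtain ⟨P, N, hP, hN, rfl, hPN⟩ := hΔ.exists_traceNorm_eq
  calc ∑ a, traceNorm (ptrace1 ((M a ⊗ₖ (1 : Matrix e e ℂ)) * (P - N)))
      ≤ ∑ a, ((ptrace1 ((M a ⊗ₖ (1 : Matrix e e ℂ)) * P)).trace.re +
          (ptrace1 ((M a ⊗ₖ (1 : Matrix e e ℂ)) * N)).trace.re) := by
        gcongr with a
        rw [mul_sub, ptrace1_sub]
        exact traceNorm_sub_le (posSemidef_ptrace1_kronecker_one_mul (hM a) hP)
          (posSemidef_ptrace1_kronecker_one_mul (hM a) hN)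
    _ = traceNorm (P - N) := by
        rw [Finset.sum_add_distrib, ← Complex.re_sum, ← Complex.re_sum,
          sum_trace_ptrace1_kronecker_one_mul hM1, sum_trace_ptrace1_kronecker_one_mul hM1, hPN]

end PartialTrace

section Steering

lemma IsDensityMatrix.ptrace1 {n e : Type*} [Fintype n] [Fintype e] [DecidableEq n]
    [DecidableEq e]    {ρ : Matrix (n × e) (n × e) ℂ} (hρ : IsDensityMatrix ρ) : IsDensityMatrix (ptrace1 ρ) :=
  ⟨posSemidef_ptrace1 hρ.1, (trace_ptrace1 ρ).trans hρ.2⟩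

lemma IsDensityMatrix.kronecker {n e : Type*} [Fintype n] [Fintype e] [DecidableEq n]
    [DecidableEq e] {A : Matrix n n ℂ} {B : Matrix e e ℂ} (hA : IsDensityMatrix A)
    (hB : IsDensityMatrix B) : IsDensityMatrix (A ⊗ₖ B) :=
  ⟨hA.1.kronecker hB.1, by rw [trace_kronecker, hA.2, hB.2, one_mul]⟩

variable {d m o : ℕ}

lemma isSeparableState_kronecker {A B : Matrix (Fin d) (Fin d) ℂ} (hA : IsDensityMatrix A)
    (hB : IsDensityMatrix B) : IsSeparableState (A ⊗ₖ B) :=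
  ⟨1, fun _ => 1, fun _ => A, fun _ => B, fun _ => zero_le_one, by simp, fun _ => hA,
    fun _ => hB, by simp⟩

lemma hasLHSModel_sum_smul {ι : Type*} [Fintype ι] (c : ι → Fin m → Fin o → ℂ)
    (B : ι → Matrix (Fin d) (Fin d) ℂ) (hc : ∀ j x a, 0 ≤ c j x a) (hc1 : ∀ j x, ∑ a, c j x a = 1)
    (hB : ∀ j, (B j).PosSemidef) (hB1 : ∑ j, (B j).trace = 1) :
    HasLHSModel fun x a => ∑ j, c j x a • B j := by
  refine ⟨fun lam => ∑ j, (∏ x, c j x (lam x)) • B j,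
    fun lam => posSemidef_sum _ fun j _ => (hB j).smul (Finset.prod_nonneg fun x _ => hc j x _),
    ?_, fun x a => ?_⟩
  · simp_rw [trace_sum, trace_smul, smul_eq_mul]
    rw [Finset.sum_comm]
    simp_rw [← Finset.sum_mul, ← Fintype.prod_sum, hc1, Finset.prod_const_one, one_mul, hB1]
  · rw [Finset.sum_comm]
    simp_rw [← Finset.sum_smul, sum_filter_prod_of_sum_eq_one (c _) (hc1 _)]

lemma isStateAssemblage_ptrace1 {M : Fin m → Fin o → Matrix (Fin d) (Fin d) ℂ}
    (hM : IsAssemblage M) {ρ : Matrix (Fin d × Fin d) (Fin d × Fin d) ℂ} (hρ : IsDensityMatrix ρ) :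
    IsStateAssemblage fun x a => ptrace1 ((M x a ⊗ₖ (1 : Matrix (Fin d) (Fin d) ℂ)) * ρ) :=
  ⟨fun x a => posSemidef_ptrace1_kronecker_one_mul (hM.1 x a) hρ.1,
    fun x => (sum_trace_ptrace1_kronecker_one_mul (hM.2 x) ρ).trans hρ.2⟩

lemma IsSeparableState.hasLHSModel_ptrace1 {M : Fin m → Fin o → Matrix (Fin d) (Fin d) ℂ}
    (hM : IsAssemblage M) {ρS : Matrix (Fin d × Fin d) (Fin d × Fin d) ℂ}
    (hρS : IsSeparableState ρS) :
    HasLHSModel fun x a => ptrace1 ((M x a ⊗ₖ (1 : Matrix (Fin d) (Fin d) ℂ)) * ρS) := by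
  obtain ⟨k, w, A, B, hw, hw1, hA, hB, rfl⟩ := hρS
  have hτ : (fun x a => ptrace1 ((M x a ⊗ₖ (1 : Matrix (Fin d) (Fin d) ℂ)) *
      ∑ j, w j • (A j ⊗ₖ B j))) = fun x a => ∑ j, (M x a * A j).trace • w j • B j := by
    funext x a
    simp_rw [Finset.mul_sum, ptrace1_sum, mul_smul_comm, ptrace1_smul,
      ptrace1_kronecker_one_mul_kronecker, smul_comm (w _)]
  rw [hτ]
  refine hasLHSModel_sum_smul _ _ (fun j x a => (hM.1 x a).trace_mul_nonneg (hA j).1)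
    (fun j x => ?_) (fun j => (hB j).1.smul (hw j)) ?_
  · rw [← trace_sum, ← Finset.sum_mul, hM.2 x, one_mul, (hA j).2]
  · simp_rw [trace_smul, (hB _).2, ← Complex.coe_smul, smul_eq_mul, mul_one]
    exact_mod_cast hw1

lemma steerability_le {p : Fin m → ℝ} (hp : ∀ x, 0 ≤ p x)
    (σ : Fin m → Fin o → Matrix (Fin d) (Fin d) ℂ)    {τ : Fin m → Fin o → Matrix (Fin d) (Fin d) ℂ} (hτ : IsStateAssemblage τ ∧ HasLHSModel τ) :
    Steerability p σ ≤ (1 / 2) * ∑ x, p x * ∑ a, traceNorm (σ x a - τ x a) := by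
  refine ciInf_le ⟨0, ?_⟩ (⟨τ, hτ⟩ : {τ // IsStateAssemblage τ ∧ HasLHSModel τ})
  rintro _ ⟨τ', rfl⟩
  exact mul_nonneg (by norm_num) (Finset.sum_nonneg fun x _ =>
      mul_nonneg (hp x) (Finset.sum_nonneg fun a _ => traceNorm_nonneg _))

end Steering

/-- The steerability of the state assemblage obtained from `M` and `ρ` is bounded by
the geometric entanglement of `ρ`. -/
theorem steerability_le_entanglement {d m o : ℕ}
    (M : Fin m → Fin o → Matrix (Fin d) (Fin d) ℂ) (hM : IsAssemblage M)
    (p : Fin m → ℝ) (hp : IsWeighting p)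
    (ρ : Matrix (Fin d × Fin d) (Fin d × Fin d) ℂ) (hρ : IsDensityMatrix ρ) :
    Steerability p (fun x a => ptrace1 (((M x a) ⊗ₖ (1 : Matrix (Fin d) (Fin d) ℂ)) * ρ))
      ≤ GeomEntanglement ρ := by
  have : Nonempty {ρS : Matrix (Fin d × Fin d) (Fin d × Fin d) ℂ //
      IsDensityMatrix ρS ∧ IsSeparableState ρS} :=
    ⟨⟨_, hρ.ptrace1.kronecker hρ.ptrace1, isSeparableState_kronecker hρ.ptrace1 hρ.ptrace1⟩⟩
  refine le_ciInf fun ⟨ρS, hρS, hsep⟩ => ?_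
  calc _ ≤ (1 / 2) * ∑ x, p x * ∑ a,
          traceNorm (ptrace1 ((M x a ⊗ₖ (1 : Matrix (Fin d) (Fin d) ℂ)) * ρ) -
            ptrace1 ((M x a ⊗ₖ (1 : Matrix (Fin d) (Fin d) ℂ)) * ρS)) :=
        steerability_le (fun x => (hp.1 x).le) _
          ⟨isStateAssemblage_ptrace1 hM hρS, hsep.hasLHSModel_ptrace1 hM⟩
    _ ≤ (1 / 2) * ∑ x, p x * traceNorm (ρ - ρS) := by
        gcongr with x
        · exact (hp.1 x).le
        simp_rw [← ptrace1_sub, ← mul_sub]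
        exact sum_traceNorm_ptrace1_kronecker_one_mul_le (hM.1 x) (hM.2 x) (hρ.1.1.sub hρS.1.1)
    _ = (1 / 2) * traceNorm (ρ - ρS) := by rw [← Finset.sum_mul, hp.2, one_mul]

end
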